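/- arXiv:1112.2411 — 2 statements merged into one kernel-verified Lean document; each statement's English description precedes it below -/
import Mathlib

section
/- For 0 < p < q define, for ε > 0, Δ_{p,q}(ε) = sup{ ‖x‖_{f^q} : x = (x_i) ∈ c₀₀, |x_i| ≤ ε for all i, and ‖x‖_{f^p} ≤ 1 }. Then lim_{ε→0⁺} Δ_{p,q}(ε) = 0. -/
/-- `f(x) = log₂(x+1)`; note `flog 0 = 0`. -/
noncomputable def flog (x : ℝ) : ℝ := Real.logb 2 (x + 1)

/-- The `n`-th largest value (1-indexed) of the sequence `(|x i|)`, i.e. the decreasing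
rearrangement of `(|x i|)`. -/
noncomputable def drear (x : ℕ →₀ ℝ) (n : ℕ) : ℝ :=
  sSup {t : ℝ | 0 ≤ t ∧ n ≤ (x.support.filter fun i => t ≤ |x i|).card}

/-- The norm `‖x‖_g = sup_{n₁ < … < n_l} (1/g(l)) ∑ |x_{n_i}|`. -/
noncomputable def gnorm (g : ℕ → ℝ) (x : ℕ →₀ ℝ) : ℝ :=
  sSup {r : ℝ | ∃ s : Finset ℕ, s.Nonempty ∧ r = (1 / g s.card) * ∑ i ∈ s, |x i|}

/-- The norm `|||x|||_g = ∑_{i ≥ 1} x_i^# / g(i)`. -/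
noncomputable def tnorm (g : ℕ → ℝ) (x : ℕ →₀ ℝ) : ℝ :=
  ∑ i ∈ Finset.range x.support.card, drear x (i + 1) / g (i + 1)

/-!
A block of `l` coordinates of size at most `ε` has sum at most `l ε`, and, when `‖x‖_{f^p} ≤ 1`,
also at most `f(l)^p`. Hence its contribution to `‖x‖_{f^q}` is at most
`min (l ε) (f(l)^p / f(l)^q)`. Since `f(l)^(p - q) → 0`, the second bound is small for all
`l > L` with `L` depending only on the target accuracy, and the first one is small for
`l ≤ L` as soon as `ε` is small compared to `1 / L`.
-/

open Filter Finset Topology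

lemma one_le_flog {x : ℝ} (hx : 1 ≤ x) : 1 ≤ flog x := by
  rw [flog, Real.le_logb_iff_rpow_le one_lt_two (by linarith), Real.rpow_one]
  linarith

lemma one_le_flog_natCast_rpow {t : ℝ} (ht : 0 ≤ t) (l : ℕ) (hl : 1 ≤ l) : 1 ≤ flog l ^ t :=
  Real.one_le_rpow (one_le_flog (Nat.one_le_cast.2 hl)) ht

lemma tendsto_flog_atTop : Tendsto flog atTop atTop :=
  (Real.tendsto_logb_atTop one_lt_two).comp (tendsto_atTop_add_const_right _ 1 tendsto_id)

lemma tendsto_flog_rpow_div_rpow {p q : ℝ} (hpq : p < q) :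
    Tendsto (fun x => flog x ^ p / flog x ^ q) atTop (𝓝 0) := by
  have hpow : Tendsto (fun y : ℝ => y ^ p / y ^ q) atTop (𝓝 0) := by
    refine (tendsto_rpow_neg_atTop (sub_pos.2 hpq)).congr' ?_
    filter_upwards [eventually_gt_atTop 0] with y hy
    rw [← Real.rpow_sub hy, neg_sub]
  exact hpow.comp tendsto_flog_atTop

lemma sum_abs_le_sum_support {α : Type*} (x : α →₀ ℝ) (s : Finset α) :
    ∑ i ∈ s, |x i| ≤ ∑ i ∈ x.support, |x i| := by
  classical
  calc ∑ i ∈ s, |x i| ≤ ∑ i ∈ s ∪ x.support, |x i| :=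
        sum_le_sum_of_subset_of_nonneg subset_union_left fun _ _ _ => abs_nonneg _
    _ = ∑ i ∈ x.support, |x i| :=
        (sum_subset subset_union_right fun i _ hi => by
          rw [Finsupp.notMem_support_iff.1 hi, abs_zero]).symm

section gnorm

variable {g : ℕ → ℝ} {x : ℕ →₀ ℝ}

lemma le_gnorm (hg : ∀ l, 1 ≤ l → 1 ≤ g l) {s : Finset ℕ} (hs : s.Nonempty) :
    (1 / g s.card) * ∑ i ∈ s, |x i| ≤ gnorm g x := by
  refine le_csSup ⟨∑ i ∈ x.support, |x i|, ?_⟩ ⟨s, hs, rfl⟩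
  rintro _ ⟨t, ht, rfl⟩
  have hgt := hg _ (card_pos.2 ht)
  calc (1 / g t.card) * ∑ i ∈ t, |x i| ≤ ∑ i ∈ t, |x i| :=
        mul_le_of_le_one_left (sum_nonneg fun _ _ => abs_nonneg _)
          ((div_le_one (one_pos.trans_le hgt)).2 hgt)
    _ ≤ ∑ i ∈ x.support, |x i| := sum_abs_le_sum_support x t

lemma gnorm_le {c : ℝ} (hc : ∀ s : Finset ℕ, s.Nonempty → (1 / g s.card) * ∑ i ∈ s, |x i| ≤ c) :
    gnorm g x ≤ c :=
  csSup_le ⟨_, {0}, singleton_nonempty 0, rfl⟩ fun _ ⟨s, hs, hr⟩ => hr ▸ hc s hs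

lemma gnorm_nonneg (hg : ∀ l, 1 ≤ l → 1 ≤ g l) (x : ℕ →₀ ℝ) : 0 ≤ gnorm g x :=
  Real.sSup_nonneg fun _ ⟨_, hs, hr⟩ => hr ▸ mul_nonneg
    (one_div_nonneg.2 (zero_le_one.trans (hg _ (card_pos.2 hs))))
    (sum_nonneg fun _ _ => abs_nonneg _)

lemma sum_abs_le_of_gnorm_le_one (hg : ∀ l, 1 ≤ l → 1 ≤ g l) (hx : gnorm g x ≤ 1)
    {s : Finset ℕ} (hs : s.Nonempty) : ∑ i ∈ s, |x i| ≤ g s.card := by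
  have h := (le_gnorm hg hs).trans hx
  rwa [one_div_mul_eq_div, div_le_one (one_pos.trans_le (hg _ (card_pos.2 hs)))] at h

lemma gnorm_le_of_abs_le_of_gnorm_le_one {h : ℕ → ℝ} {ε δ : ℝ} {L : ℕ}
    (hg : ∀ l, 1 ≤ l → 1 ≤ g l) (hh : ∀ l, 1 ≤ l → 1 ≤ h l) (hxε : ∀ i, |x i| ≤ ε)
    (hxg : gnorm g x ≤ 1) (hL : ∀ l, L < l → g l / h l ≤ δ) (hLε : L * ε ≤ δ) :
    gnorm h x ≤ δ := by
  refine gnorm_le fun s hs => ?_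
  have hhs := hh _ (card_pos.2 hs)
  have hhpos : 0 < h s.card := one_pos.trans_le hhs
  rcases le_or_gt s.card L with hsL | hsL
  · have hε : 0 ≤ ε := (abs_nonneg _).trans (hxε 0)
    calc (1 / h s.card) * ∑ i ∈ s, |x i| ≤ ∑ i ∈ s, |x i| :=
          mul_le_of_le_one_left (sum_nonneg fun _ _ => abs_nonneg _) ((div_le_one hhpos).2 hhs)
      _ ≤ s.card * ε := by simpa using sum_le_card_nsmul s _ ε fun i _ => hxε i
      _ ≤ L * ε := by gcongr
      _ ≤ δ := hLε
  · calc (1 / h s.card) * ∑ i ∈ s, |x i| ≤ (1 / h s.card) * g s.card := by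
          gcongr
          exact sum_abs_le_of_gnorm_le_one hg hxg hs
      _ = g s.card / h s.card := one_div_mul_eq_div _ _
      _ ≤ δ := hL _ hsL

end gnorm

theorem tendsto_Delta_zero (p q : ℝ) (hp : 0 < p) (hpq : p < q) :
    Filter.Tendsto
      (fun ε : ℝ => sSup {r : ℝ | ∃ x : ℕ →₀ ℝ, (∀ i, |x i| ≤ ε) ∧
        gnorm (fun l => flog l ^ p) x ≤ 1 ∧ r = gnorm (fun l => flog l ^ q) x})
      (nhdsWithin 0 (Set.Ioi 0)) (nhds 0) := by
  have hq : 0 ≤ q := hp.le.trans hpq.le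
  rw [Metric.tendsto_nhdsWithin_nhds]
  intro δ hδ
  obtain ⟨L, hL⟩ := eventually_atTop.1 <| ((tendsto_flog_rpow_div_rpow hpq).comp
    tendsto_natCast_atTop_atTop).eventually (eventually_le_nhds (half_pos hδ))
  refine ⟨δ / 2 / (L + 1), by positivity, fun ε (hε : 0 < ε) hεL => ?_⟩
  rw [dist_zero_right, Real.norm_of_nonneg hε.le, lt_div_iff₀ (by positivity)] at hεL
  have hLε : L * ε ≤ δ / 2 := by nlinarith
  rw [dist_zero_right, Real.norm_of_nonneg (Real.sSup_nonneg ?_)]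
  · refine (Real.sSup_le ?_ (half_pos hδ).le).trans_lt (half_lt_self hδ)
    rintro _ ⟨x, hxε, hxp, rfl⟩
    exact gnorm_le_of_abs_le_of_gnorm_le_one (one_le_flog_natCast_rpow hp.le)
      (one_le_flog_natCast_rpow hq) hxε hxp (fun l hl => hL l hl.le) hLε
  · rintro _ ⟨x, -, -, rfl⟩
    exact gnorm_nonneg (one_le_flog_natCast_rpow hq) x
end

section
/- For all n ∈ ℕ and all ε > 0 there is N = N(n,ε) ∈ ℕ with the following property: whenever (E, ‖·‖_E) is a Banach space containing a normalized 1-subsymmetric sequence (e_i) and c ∈ (0,1] is such that ‖Σ_{j=1}^k e_j‖_E ≥ c·k/f(k) for all k ∈ ℕ, then there exist m ∈ [n, N] divisible by n and successive subsets A₁ < A₂ < … < A_n of {1,2,…,m}, each of cardinality m/n, such that the vectors x_i = (Σ_{j∈A_i} e_j)/‖Σ_{j∈A_i} e_j‖_E, i = 1,…,n, satisfy c^{1/n}·(1−ε)·Σ_{i=1}^n |a_i| ≤ ‖Σ_{i=1}^n a_i x_i‖_E ≤ Σ_{i=1}^n |a_i| for all scalars (a_i); i.e. (x_i)_{i=1}^n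 is c^{1/n}(1−ε)-equivalent to the unit vector basis of ℓ₁ⁿ. -/
/-!
Write `S k = ‖e 0 + ⋯ + e (k - 1)‖`. Subsymmetry makes `S k / k` nonincreasing, and it lets two
adjacent nonnegative coefficients be merged without decreasing the norm (the unmerged vector is a
convex combination of two spreads of the merged one); hence a vector with natural coefficients
`κ` has norm at least `S (∑ κ)`.

Fix `Q ≥ 2 n / ε`. As `S (Q ^ M) ≥ c Q ^ M / f (Q ^ M)` and `f (Q ^ M)` grows only linearly in
`M`, for large `M` the ratio `S (Q ^ (j + 1)) / S (Q ^ j)` cannot stay below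
`c ^ (1 / n) (1 - ε / 2) Q` for all `j < M`. At a scale `L = Q ^ j` where it does not, take `n`
consecutive blocks of length `L`. Rounding each `|a i|` down to a multiple `k i (∑ |a i|) / Q`
leaves `∑ k i ≥ Q - n`; unconditionality, merging and the monotonicity of `S k / k` then give
`‖∑ a i x i‖ ≥ c ^ (1 / n) (1 - ε / 2) (1 - n / Q) ∑ |a i|`.
-/

open Finset

section

variable {E : Type*} [NormedAddCommGroup E] [NormedSpace ℝ E]

def IsSubsymmetric (e : ℕ → E) : Prop :=
  ∀ (l : ℕ) (a εs : Fin l → ℝ) (ns : Fin l → ℕ), StrictMono ns →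
    (∀ i, εs i = 1 ∨ εs i = -1) →
    ‖∑ i, (a i * εs i) • e (ns i)‖ = ‖∑ i, a i • e (i : ℕ)‖

theorem Fin.val_succAbove {n : ℕ} (p : Fin (n + 1)) (i : Fin n) :
    (p.succAbove i : ℕ) = if (i : ℕ) < p then (i : ℕ) else i + 1 := by
  rw [Fin.succAbove]
  split_ifs <;> simp_all [Fin.lt_def]

def insertZero (p : ℕ) (b : ℕ → ℝ) (s : ℕ) : ℝ :=
  if s < p then b s else if s = p then 0 else b (s - 1)

/-- The stages of merging a row of ones, from the left, into the coefficients `κ`. -/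
def mergeStage (κ : ℕ → ℕ) (p d t : ℕ) : ℝ :=
  if t < p then κ t else if t = p then d else 1

theorem mergeStage_zero_zero (κ : ℕ → ℕ) : mergeStage κ 0 0 = insertZero 0 fun _ => 1 := by
  ext t
  simp [mergeStage, insertZero]

theorem mergeStage_succ_zero (κ : ℕ → ℕ) (p : ℕ) :
    mergeStage κ (p + 1) 0 = insertZero (p + 1) (mergeStage κ p (κ p)) := by
  ext t
  simp only [mergeStage, insertZero]
  split_ifs <;> first | rfl | omega | simp_all

def block (L i : ℕ) : Finset ℕ := Ioc ((i - 1) * L) (i * L)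

theorem sum_range_mul_eq_sum_sum {M : Type*} [AddCommMonoid M] (f : ℕ → M) (n L : ℕ) :
    ∑ s ∈ range (n * L), f s = ∑ i ∈ range n, ∑ t ∈ range L, f (L * i + t) := by
  induction n with
  | zero => simp
  | succ n ih => rw [add_mul, one_mul, sum_range_add, ih, sum_range_succ, mul_comm n L]

theorem sum_range_mul_div {M : Type*} [AddCommMonoid M] (f : ℕ → M) {L : ℕ} (hL : 0 < L)
    (n : ℕ) : ∑ s ∈ range (n * L), f (s / L) = L • ∑ i ∈ range n, f i := by
  rw [sum_range_mul_eq_sum_sum, smul_sum]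
  refine sum_congr rfl fun i _ => ?_
  rw [sum_congr rfl fun t ht => by rw [Nat.mul_add_div hL, Nat.div_eq_of_lt (mem_range.mp ht),
    add_zero], sum_const, card_range]

theorem exists_nat_quantization {x : ℕ → ℝ} (hx : ∀ i, 0 ≤ x i) (n : ℕ)
    (hA : 0 < ∑ i ∈ range n, x i) {Q : ℕ} (hQ : 0 < Q) :
    ∃ k : ℕ → ℕ, (∀ i, (∑ j ∈ range n, x j) / Q * k i ≤ x i) ∧ ∑ i ∈ range n, k i ≤ Q ∧
      (Q : ℝ) - n ≤ ∑ i ∈ range n, (k i : ℝ) := by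
  set A := ∑ i ∈ range n, x i
  refine ⟨fun i => ⌊Q / A * x i⌋₊, fun i => ?_, ?_, ?_⟩
  · have hQ' : (Q : ℝ) ≠ 0 := by positivity
    calc A / Q * ⌊Q / A * x i⌋₊ ≤ A / Q * (Q / A * x i) :=
          mul_le_mul_of_nonneg_left (Nat.floor_le (by positivity [hx i])) (by positivity)
      _ = x i := by field_simp
  · have : ∑ i ∈ range n, (⌊Q / A * x i⌋₊ : ℝ) ≤ Q := calc
      _ ≤ ∑ i ∈ range n, Q / A * x i := sum_le_sum fun i _ => Nat.floor_le (by positivity [hx i])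
      _ = Q := by rw [← mul_sum, div_mul_cancel₀ _ hA.ne']
    exact_mod_cast this
  · calc (Q : ℝ) - n = ∑ i ∈ range n, (Q / A * x i - 1) := by
          rw [sum_sub_distrib, ← mul_sum, div_mul_cancel₀ _ hA.ne']; simp
      _ ≤ _ := sum_le_sum fun i _ => by linarith [Nat.lt_floor_add_one (Q / A * x i)]

theorem block_subset_Icc {L n i : ℕ} (hi : i ∈ Icc 1 n) : block L i ⊆ Icc 1 (n * L) := by
  intro s hs
  rw [mem_Icc] at hi ⊢
  rw [block, mem_Ioc] at hs
  have := Nat.mul_le_mul_right L hi.2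
  omega

theorem card_block {L i : ℕ} (hi : 1 ≤ i) : (block L i).card = L := by
  have := Nat.le_mul_of_pos_left L hi
  rw [block, Nat.card_Ioc, Nat.sub_one_mul]
  omega

theorem lt_of_mem_block {L i i' s t : ℕ} (hii' : i < i') (hs : s ∈ block L i)
    (ht : t ∈ block L i') : s < t := by
  rw [block, mem_Ioc] at hs ht
  have := Nat.mul_le_mul_right L (Nat.le_sub_one_of_lt hii')
  omega

theorem sum_block {M : Type*} [AddCommMonoid M] (f : ℕ → M) (L i : ℕ) :
    ∑ j ∈ block L (i + 1), f j = ∑ t ∈ range L, f (L * i + t + 1) := by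
  rw [block, ← Ico_add_one_add_one_eq_Ioc, sum_Ico_eq_sum_range, Nat.add_sub_cancel,
    show (i + 1) * L + 1 - (i * L + 1) = L by rw [add_mul, one_mul]; omega]
  refine sum_congr rfl fun t _ => congrArg f ?_
  ring

theorem sum_Icc_smul_sum_block (w : ℕ → ℝ) (e : ℕ → E) {L : ℕ} (hL : 0 < L) (n : ℕ) :
    ∑ i ∈ Icc 1 n, w i • ∑ j ∈ block L i, e j = ∑ s ∈ range (n * L), w (s / L + 1) • e (s + 1) := by
  rw [← Ico_add_one_right_eq_Icc, sum_Ico_eq_sum_range, Nat.add_sub_cancel,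
    sum_range_mul_eq_sum_sum]
  refine sum_congr rfl fun i _ => ?_
  rw [add_comm 1 i, sum_block, smul_sum]
  refine sum_congr rfl fun t ht => ?_
  rw [Nat.mul_add_div hL, Nat.div_eq_of_lt (mem_range.mp ht), add_zero]

theorem norm_sum_div_norm_smul_le {ι : Type*} (s : Finset ι) (a : ι → ℝ) (u : ι → E) :
    ‖∑ i ∈ s, (a i / ‖u i‖) • u i‖ ≤ ∑ i ∈ s, |a i| := by
  refine (norm_sum_le _ _).trans (sum_le_sum fun i _ => ?_)
  rw [norm_smul, Real.norm_eq_abs, abs_div, abs_norm]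
  rcases eq_or_ne ‖u i‖ 0 with h | h
  · simp [h]
  · rw [div_mul_cancel₀ _ h]

namespace IsSubsymmetric

variable {e : ℕ → E} (he : IsSubsymmetric e)
include he

theorem norm_sum_comp_strictMono {l : ℕ} {ns : Fin l → ℕ} (hns : StrictMono ns) (a : Fin l → ℝ) :
    ‖∑ i, a i • e (ns i)‖ = ‖∑ i, a i • e i‖ := by
  simpa using he l a 1 ns hns fun _ => Or.inl rfl

theorem norm_sum_range_comp_strictMono {ns : ℕ → ℕ} (hns : StrictMono ns) (N : ℕ) (b : ℕ → ℝ) :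
    ‖∑ t ∈ range N, b t • e (ns t)‖ = ‖∑ t ∈ range N, b t • e t‖ := by
  simpa only [Fin.sum_univ_eq_sum_range (fun t => b t • e (ns t)),
    Fin.sum_univ_eq_sum_range (fun t => b t • e t)] using
    he.norm_sum_comp_strictMono (ns := fun i : Fin N => ns i) (fun _ _ h => hns h) fun i => b i

theorem norm_sum_range_abs_smul (N : ℕ) (b : ℕ → ℝ) :
    ‖∑ t ∈ range N, |b t| • e t‖ = ‖∑ t ∈ range N, b t • e t‖ := by
  have h := he N (fun i => b i) (fun i => if b i < 0 then -1 else 1) (fun i => i)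
    Fin.val_strictMono fun i => by split_ifs <;> simp
  rw [Fin.sum_univ_eq_sum_range (fun t => b t • e t)] at h
  rw [← h, ← Fin.sum_univ_eq_sum_range (fun t => |b t| • e t)]
  congr 2 with i
  split_ifs with hb
  · rw [abs_of_neg hb, mul_neg_one]
  · rw [abs_of_nonneg (not_lt.mp hb), mul_one]

theorem norm_sum_range_update_le (N j : ℕ) (b : ℕ → ℝ) {x : ℝ} (hx : |x| ≤ |b j|) :
    ‖∑ t ∈ range N, Function.update b j x t • e t‖ ≤ ‖∑ t ∈ range N, b t • e t‖ := by
  rcases eq_or_ne (b j) 0 with hbj | hbj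
  · have hx0 : x = 0 := abs_nonpos_iff.mp (by simpa [hbj] using hx)
    rw [hx0, ← hbj, Function.update_eq_self]
  -- `x` is a convex combination of `b j` and `-b j`, and flipping a sign keeps the norm
  set μ := x / b j
  have hμ : |μ| ≤ 1 := by rw [abs_div]; exact div_le_one_of_le₀ hx (abs_nonneg _)
  have hflip : ‖∑ t ∈ range N, Function.update b j (-b j) t • e t‖ =
      ‖∑ t ∈ range N, b t • e t‖ := by
    rw [← he.norm_sum_range_abs_smul, ← he.norm_sum_range_abs_smul N b]
    congr 2 with t
    rcases eq_or_ne t j with rfl | htj <;> simp [Function.update_of_ne, *]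
  have hsplit : ∑ t ∈ range N, Function.update b j x t • e t =
      ((1 + μ) / 2) • ∑ t ∈ range N, b t • e t +
        ((1 - μ) / 2) • ∑ t ∈ range N, Function.update b j (-b j) t • e t := by
    simp only [smul_sum, ← sum_add_distrib, smul_smul, ← add_smul]
    refine sum_congr rfl fun t _ => congrArg (· • e t) ?_
    rcases eq_or_ne t j with rfl | htj
    · simp only [Function.update_self, μ]; field_simp; ring
    · simp only [Function.update_of_ne htj]; ring
  have h1 : 0 ≤ 1 + μ := by linarith [neg_abs_le μ]
  have h2 : 0 ≤ 1 - μ := by linarith [le_abs_self μ]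
  calc _ ≤ ‖((1 + μ) / 2) • ∑ t ∈ range N, b t • e t‖ +
        ‖((1 - μ) / 2) • ∑ t ∈ range N, Function.update b j (-b j) t • e t‖ :=
        hsplit ▸ norm_add_le _ _
    _ = ‖∑ t ∈ range N, b t • e t‖ := by
        rw [norm_smul, norm_smul, hflip, Real.norm_of_nonneg (by linarith),
          Real.norm_of_nonneg (by linarith)]; ring

theorem norm_sum_range_le_of_abs_le (N : ℕ) {a b : ℕ → ℝ} (hab : ∀ t, |b t| ≤ |a t|) :
    ‖∑ t ∈ range N, b t • e t‖ ≤ ‖∑ t ∈ range N, a t • e t‖ := by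
  suffices ∀ j, ‖∑ t ∈ range N, (if t < j then b t else a t) • e t‖ ≤
      ‖∑ t ∈ range N, a t • e t‖ by
    simpa [sum_congr rfl fun t ht => if_pos (mem_range.mp ht)] using this N
  intro j
  induction j with
  | zero => simp
  | succ j ih =>
    refine le_trans (le_of_eq ?_) ((he.norm_sum_range_update_le N j _ (x := b j) ?_).trans ih)
    · congr 2 with t
      rcases lt_trichotomy t j with h | rfl | h
      · simp [Function.update_of_ne h.ne, h, h.trans (Nat.lt_succ_self j)]
      · simp
      · simp [Function.update_of_ne h.ne', show ¬ t < j by omega, show ¬ t < j + 1 by omega]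
    · simpa using hab j

theorem norm_sum_range_insertZero {p N : ℕ} (hp : p ≤ N) (b : ℕ → ℝ) :
    ‖∑ s ∈ range (N + 1), insertZero p b s • e s‖ = ‖∑ t ∈ range N, b t • e t‖ := by
  let q : Fin (N + 1) := ⟨p, Nat.lt_succ_of_le hp⟩
  have hq : insertZero p b q = 0 := by simp [insertZero, q]
  have hsucc : ∀ i : Fin N, insertZero p b (q.succAbove i) = b i := by
    intro i
    rw [Fin.val_succAbove]
    split_ifs with h <;> simp only [insertZero, q] at h ⊢ <;> split_ifs <;> first | rfl | omega
  rw [← Fin.sum_univ_eq_sum_range (fun s => insertZero p b s • e s), Fin.sum_univ_succAbove _ q,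
    hq, zero_smul, zero_add, ← Fin.sum_univ_eq_sum_range (fun t => b t • e t)]
  simp only [hsucc]
  exact he.norm_sum_comp_strictMono (ns := fun i => (q.succAbove i : ℕ))
    (Fin.val_strictMono.comp (Fin.strictMono_succAbove q)) fun i => b i

theorem norm_sum_range_le_of_split {p N : ℕ} (hpN : p < N) {b c : ℕ → ℝ}
    (hc₀ : 0 ≤ c p) (hc₁ : 0 ≤ c (p + 1)) (hlt : ∀ t < p, c t = b t)
    (hp : c p + c (p + 1) = b p) (hgt : ∀ t, p < t → c (t + 1) = b t) :
    ‖∑ s ∈ range (N + 1), c s • e s‖ ≤ ‖∑ t ∈ range N, b t • e t‖ := by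
  set μ := c p / b p
  have hμb : μ * b p = c p := by
    rcases eq_or_ne (b p) 0 with h | h
    · simp only [μ, h, div_zero, zero_mul]; linarith
    · exact div_mul_cancel₀ _ h
  have hμ₀ : 0 ≤ μ := div_nonneg hc₀ (hp ▸ add_nonneg hc₀ hc₁)
  have hμ₁ : μ ≤ 1 := div_le_one_of_le₀ (by linarith) (hp ▸ add_nonneg hc₀ hc₁)
  -- `c` is a convex combination of `b` with a zero inserted after, resp. at, position `p`
  have hsplit : ∑ s ∈ range (N + 1), c s • e s =
      μ • ∑ s ∈ range (N + 1), insertZero (p + 1) b s • e s +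
        (1 - μ) • ∑ s ∈ range (N + 1), insertZero p b s • e s := by
    simp only [smul_sum, ← sum_add_distrib, smul_smul, ← add_smul]
    refine sum_congr rfl fun s _ => congrArg (· • e s) ?_
    obtain h | rfl | h := lt_trichotomy s p
    · simp [insertZero, h, h.trans (Nat.lt_succ_self p), hlt s h]; ring
    · simp [insertZero, hμb]
    · rcases (Nat.succ_le_of_lt h).eq_or_lt with rfl | h'
      · simp [insertZero]; linarith
      · have := hgt (s - 1) (by omega)
        rw [Nat.sub_add_cancel (by omega)] at this
        simp [insertZero, show ¬ s < p by omega, show s ≠ p by omega, show ¬ s < p + 1 by omega,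
          show s ≠ p + 1 by omega, this]; ring
  calc _ ≤ ‖μ • ∑ s ∈ range (N + 1), insertZero (p + 1) b s • e s‖ +
        ‖(1 - μ) • ∑ s ∈ range (N + 1), insertZero p b s • e s‖ := hsplit ▸ norm_add_le _ _
    _ = ‖∑ t ∈ range N, b t • e t‖ := by
        rw [norm_smul, norm_smul, he.norm_sum_range_insertZero hpN,
          he.norm_sum_range_insertZero hpN.le, Real.norm_of_nonneg hμ₀,
          Real.norm_of_nonneg (by linarith)]; ring

theorem mul_norm_sum_range_succ_le (k : ℕ) :
    (k : ℝ) * ‖∑ t ∈ range (k + 1), e t‖ ≤ (k + 1) * ‖∑ t ∈ range k, e t‖ := by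
  set u := ∑ t ∈ range (k + 1), e t
  -- `k • u` is the sum of the `k + 1` vectors obtained from `u` by deleting one term
  have hdel : ∀ i : Fin (k + 1), ∑ t : Fin k, e (i.succAbove t) = u - e i := by
    intro i
    rw [eq_sub_iff_add_eq', ← Fin.sum_univ_succAbove (fun s : Fin (k + 1) => e s) i,
      Fin.sum_univ_eq_sum_range]
  have hnorm : ∀ i : Fin (k + 1), ‖∑ t : Fin k, e (i.succAbove t)‖ = ‖∑ t ∈ range k, e t‖ := by
    intro i
    simpa [Fin.sum_univ_eq_sum_range (fun t => e t)] using
      he.norm_sum_comp_strictMono (ns := fun t => (i.succAbove t : ℕ))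
        (Fin.val_strictMono.comp (Fin.strictMono_succAbove i)) 1
  have hsum : (k : ℝ) • u = ∑ i : Fin (k + 1), ∑ t : Fin k, e (i.succAbove t) := by
    rw [sum_congr rfl fun i _ => hdel i, sum_sub_distrib, sum_const, card_univ, Fintype.card_fin,
      Fin.sum_univ_eq_sum_range (fun t => e t), ← Nat.cast_smul_eq_nsmul ℝ, Nat.cast_succ,
      add_smul, one_smul, add_sub_cancel_right]
  calc (k : ℝ) * ‖u‖ = ‖(k : ℝ) • u‖ := by rw [norm_smul, Real.norm_natCast]
    _ ≤ ∑ i : Fin (k + 1), ‖∑ t : Fin k, e (i.succAbove t)‖ := hsum ▸ norm_sum_le _ _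
    _ = (k + 1) * ‖∑ t ∈ range k, e t‖ := by simp [hnorm]

theorem mul_norm_sum_range_le {a b : ℕ} (hab : a ≤ b) :
    (a : ℝ) * ‖∑ t ∈ range b, e t‖ ≤ b * ‖∑ t ∈ range a, e t‖ := by
  induction b, hab using Nat.le_induction with
  | base => rfl
  | succ b hab ih =>
    rcases Nat.eq_zero_or_pos a with rfl | ha
    · simp
    have hb : (0 : ℝ) < b := by exact_mod_cast ha.trans_le hab
    have hstep := he.mul_norm_sum_range_succ_le b
    have : (b : ℝ) * (a * ‖∑ t ∈ range (b + 1), e t‖) ≤ b * ((b + 1) * ‖∑ t ∈ range a, e t‖) := by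
      nlinarith [mul_le_mul_of_nonneg_left hstep (Nat.cast_nonneg a : (0 : ℝ) ≤ a),
        mul_le_mul_of_nonneg_left ih (by positivity : (0 : ℝ) ≤ b + 1)]
    simpa using le_of_mul_le_mul_left this hb

theorem norm_sum_range_mergeStage_le_succ (κ : ℕ → ℕ) (p d R : ℕ) :
    ‖∑ t ∈ range (p + 1 + (R + 1)), mergeStage κ p d t • e t‖ ≤
      ‖∑ t ∈ range (p + 1 + R), mergeStage κ p (d + 1) t • e t‖ := by
  refine he.norm_sum_range_le_of_split (p := p) (N := p + 1 + R) (by omega) ?_ ?_ ?_ ?_ ?_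
  · simp [mergeStage]
  · simp [mergeStage]
  · intro t ht
    simp [mergeStage, ht]
  · simp [mergeStage]
  · intro t ht
    simp [mergeStage, show ¬ t + 1 < p by omega, show t + 1 ≠ p by omega, ht.not_gt, ht.ne']

theorem norm_sum_range_le_mergeStage (κ : ℕ → ℕ) (p d R : ℕ) :
    ‖∑ t ∈ range (∑ i ∈ range p, κ i + d + R), e t‖ ≤
      ‖∑ t ∈ range (p + 1 + R), mergeStage κ p d t • e t‖ := by
  have step : ∀ p d, (∀ R, ‖∑ t ∈ range (∑ i ∈ range p, κ i + d + R), e t‖ ≤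
      ‖∑ t ∈ range (p + 1 + R), mergeStage κ p d t • e t‖) →
      ∀ R, ‖∑ t ∈ range (∑ i ∈ range p, κ i + (d + 1) + R), e t‖ ≤
        ‖∑ t ∈ range (p + 1 + R), mergeStage κ p (d + 1) t • e t‖ := fun p d ih R => by
    rw [show ∑ i ∈ range p, κ i + (d + 1) + R = ∑ i ∈ range p, κ i + d + (R + 1) by omega]
    exact (ih (R + 1)).trans (he.norm_sum_range_mergeStage_le_succ κ p d R)
  induction p generalizing d R with
  | zero =>
    induction d generalizing R with
    | zero =>
      have h := he.norm_sum_range_insertZero (Nat.zero_le R) fun _ => 1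
      simp only [one_smul] at h
      rw [sum_range_zero, zero_add, zero_add, zero_add, add_comm, ← h, mergeStage_zero_zero]
    | succ d ih => exact step 0 d ih R
  | succ p ihp =>
    induction d generalizing R with
    | zero =>
      rw [sum_range_succ, add_zero, mergeStage_succ_zero,
        show p + 1 + 1 + R = p + 1 + R + 1 by ring, he.norm_sum_range_insertZero (by omega)]
      exact ihp (κ p) R
    | succ d ih => exact step (p + 1) d ih R

theorem norm_sum_range_sum_le (κ : ℕ → ℕ) (l : ℕ) :
    ‖∑ t ∈ range (∑ i ∈ range l, κ i), e t‖ ≤ ‖∑ t ∈ range l, (κ t : ℝ) • e t‖ := by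
  simpa [sum_range_succ, mergeStage, sum_congr rfl fun t ht => if_pos (mem_range.mp ht)] using
    he.norm_sum_range_le_mergeStage κ l 0 0

theorem mul_norm_le_norm_sum_blocks {ρ : ℝ} {L Q : ℕ} (hL : 0 < L) (hQ : 0 < Q)
    (hgrowth : ρ * Q * ‖∑ t ∈ range L, e t‖ ≤ ‖∑ t ∈ range (Q * L), e t‖) {n : ℕ}
    (k : ℕ → ℕ) (hk : ∑ i ∈ range n, k i ≤ Q) :
    ρ * (∑ i ∈ range n, k i : ℕ) * ‖∑ t ∈ range L, e t‖ ≤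
      ‖∑ s ∈ range (n * L), (k (s / L) : ℝ) • e s‖ := by
  set K := ∑ i ∈ range n, k i
  have hsum : ∑ s ∈ range (n * L), k (s / L) = K * L := by
    rw [sum_range_mul_div k hL, smul_eq_mul, mul_comm]
  have hmerge := he.norm_sum_range_sum_le (fun s => k (s / L)) (n * L)
  have hratio := he.mul_norm_sum_range_le (Nat.mul_le_mul_right L hk)
  rw [hsum] at hmerge
  have hQL : (0 : ℝ) < Q * L := by positivity
  -- the growth from `L` to `Q * L` is inherited by `K * L` because `S k / k` decreases
  have : (Q * L : ℝ) * (ρ * K * ‖∑ t ∈ range L, e t‖) ≤ (Q * L) * ‖∑ t ∈ range (K * L), e t‖ := by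
    push_cast at hratio
    nlinarith [mul_le_mul_of_nonneg_left hgrowth (by positivity : (0 : ℝ) ≤ K * L)]
  exact (le_of_mul_le_mul_left this hQL).trans hmerge

theorem mul_sum_abs_le_norm_sum_blocks {ρ : ℝ} (hρ : 0 ≤ ρ) {L Q : ℕ} (hL : 0 < L) (hQ : 0 < Q)
    (hgrowth : ρ * Q * ‖∑ t ∈ range L, e t‖ ≤ ‖∑ t ∈ range (Q * L), e t‖) (n : ℕ) (b : ℕ → ℝ) :
    ρ * (1 - n / Q) * ‖∑ t ∈ range L, e t‖ * ∑ i ∈ range n, |b i| ≤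
      ‖∑ s ∈ range (n * L), b (s / L) • e s‖ := by
  set A := ∑ i ∈ range n, |b i|
  rcases (sum_nonneg fun i _ => abs_nonneg (b i) : 0 ≤ A).eq_or_lt with hA | hA
  · rw [show A = 0 from hA.symm, mul_zero]; exact norm_nonneg _
  -- compare `b` with `A / Q` times an integer-valued block pattern of total mass close to `Q`
  obtain ⟨k, hkb, hkQ, hQk⟩ := exists_nat_quantization (fun i => abs_nonneg (b i)) n hA hQ
  have hmono : ‖∑ s ∈ range (n * L), (A / Q * k (s / L)) • e s‖ ≤
      ‖∑ s ∈ range (n * L), b (s / L) • e s‖ :=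
    he.norm_sum_range_le_of_abs_le _ fun s => by
      rw [abs_of_nonneg (by positivity)]; exact hkb (s / L)
  have hQ' : (0 : ℝ) < Q := by exact_mod_cast hQ
  calc ρ * (1 - n / Q) * ‖∑ t ∈ range L, e t‖ * A
      = A / Q * (ρ * (Q - n) * ‖∑ t ∈ range L, e t‖) := by field_simp
    _ ≤ A / Q * (ρ * (∑ i ∈ range n, k i : ℕ) * ‖∑ t ∈ range L, e t‖) := by
        push_cast; gcongr
    _ ≤ A / Q * ‖∑ s ∈ range (n * L), (k (s / L) : ℝ) • e s‖ := by
        gcongr; exact he.mul_norm_le_norm_sum_blocks hL hQ hgrowth k hkQ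
    _ = ‖∑ s ∈ range (n * L), (A / Q * k (s / L)) • e s‖ := by
        rw [← norm_smul_of_nonneg (by positivity), smul_sum]
        simp only [smul_smul]
    _ ≤ _ := hmono

theorem norm_sum_block {L i : ℕ} (hi : 1 ≤ i) :
    ‖∑ j ∈ block L i, e j‖ = ‖∑ t ∈ range L, e t‖ := by
  obtain ⟨i, rfl⟩ := Nat.exists_eq_add_of_le' hi
  rw [sum_block]
  simpa using he.norm_sum_range_comp_strictMono (ns := fun t => L * i + t + 1)
    (fun _ _ h => by dsimp only; omega) L 1

theorem norm_sum_div_norm_smul_block {L : ℕ} (hL : 0 < L) (n : ℕ) (a : ℕ → ℝ) :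
    ‖∑ i ∈ Icc 1 n, (a i / ‖∑ j ∈ block L i, e j‖) • ∑ j ∈ block L i, e j‖ =
      ‖∑ s ∈ range (n * L), a (s / L + 1) • e s‖ / ‖∑ t ∈ range L, e t‖ := by
  rw [sum_congr rfl fun i hi => by rw [he.norm_sum_block (mem_Icc.mp hi).1],
    sum_Icc_smul_sum_block _ _ hL,
    he.norm_sum_range_comp_strictMono (ns := (· + 1)) (fun _ _ h => by dsimp only; omega),
    div_eq_inv_mul, ← norm_smul_of_nonneg (by positivity), smul_sum]
  simp only [smul_smul, div_eq_inv_mul]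

theorem exists_blocks_of_growth {ρ : ℝ} (hρ : 0 ≤ ρ) {n L Q : ℕ} (hn : 0 < n) (hL : 0 < L)
    (hQ : 0 < Q) (hSL : 0 < ‖∑ t ∈ range L, e t‖)
    (hgrowth : ρ * Q * ‖∑ t ∈ range L, e t‖ ≤ ‖∑ t ∈ range (Q * L), e t‖) :
    ∃ A : ℕ → Finset ℕ,
      (∀ i ∈ Icc 1 n, A i ⊆ Icc 1 (n * L) ∧ (A i).card = n * L / n) ∧
      (∀ i ∈ Icc 1 n, ∀ i' ∈ Icc 1 n, i < i' → ∀ s ∈ A i, ∀ t ∈ A i', s < t) ∧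
      ∀ a : ℕ → ℝ,
        ρ * (1 - n / Q) * ∑ i ∈ Icc 1 n, |a i| ≤
          ‖∑ i ∈ Icc 1 n, (a i / ‖∑ j ∈ A i, e j‖) • ∑ j ∈ A i, e j‖ ∧
        ‖∑ i ∈ Icc 1 n, (a i / ‖∑ j ∈ A i, e j‖) • ∑ j ∈ A i, e j‖ ≤ ∑ i ∈ Icc 1 n, |a i| := by
  refine ⟨block L, fun i hi => ⟨block_subset_Icc hi, ?_⟩,
    fun i _ i' _ hii' s hs t ht => lt_of_mem_block hii' hs ht,
    fun a => ⟨?_, norm_sum_div_norm_smul_le _ _ _⟩⟩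
  · rw [card_block (mem_Icc.mp hi).1, Nat.mul_div_cancel_left _ hn]
  · rw [he.norm_sum_div_norm_smul_block hL, le_div_iff₀ hSL, ← Ico_add_one_right_eq_Icc,
      sum_Ico_eq_sum_range, Nat.add_sub_cancel]
    calc _ = ρ * (1 - n / Q) * ‖∑ t ∈ range L, e t‖ * ∑ i ∈ range n, |a (i + 1)| := by
          simp only [add_comm 1]; ring
      _ ≤ _ := he.mul_sum_abs_le_norm_sum_blocks hρ hL hQ hgrowth n fun i => a (i + 1)

end IsSubsymmetric

end

theorem exists_le_pow_mul_lt_one (n : ℕ) {r : ℝ} (hr₀ : 0 ≤ r) (hr₁ : r < 1) (C : ℝ) :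
    ∃ M, n ≤ M ∧ r ^ M * (M * C + 1) < 1 := by
  have hlim : Filter.Tendsto (fun M : ℕ => C * (M * r ^ M) + r ^ M) Filter.atTop (nhds 0) := by
    simpa using ((tendsto_self_mul_const_pow_of_lt_one hr₀ hr₁).const_mul C).add
      (tendsto_pow_atTop_nhds_zero_of_lt_one hr₀ hr₁)
  obtain ⟨M, hM, hnM⟩ :=
    ((hlim.eventually (gt_mem_nhds one_pos)).and (Filter.eventually_ge_atTop n)).exists
  exact ⟨M, hnM, by linarith [show r ^ M * (M * C + 1) = C * (M * r ^ M) + r ^ M by ring]⟩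

theorem flog_natCast_pow_le {Q : ℕ} (hQ : 0 < Q) (M : ℕ) :
    flog ((Q ^ M : ℕ) : ℝ) ≤ M * Real.logb 2 Q + 1 := by
  have hQM : (1 : ℝ) ≤ (Q : ℝ) ^ M := one_le_pow₀ (by exact_mod_cast hQ)
  calc flog ((Q ^ M : ℕ) : ℝ) ≤ Real.logb 2 (2 * (Q : ℝ) ^ M) := by
        rw [flog, Nat.cast_pow]
        exact Real.logb_le_logb_of_le (by norm_num) (by positivity) (by linarith)
    _ = M * Real.logb 2 Q + 1 := by
        rw [Real.logb_mul (by norm_num) (by positivity), Real.logb_self_eq_one (by norm_num),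
          Real.logb_pow]; ring

theorem rpow_one_div_pow_le {c : ℝ} (hc₀ : 0 ≤ c) (hc₁ : c ≤ 1) {n M : ℕ} (hn : 0 < n)
    (hnM : n ≤ M) : (c ^ ((1 : ℝ) / n)) ^ M ≤ c := by
  calc (c ^ ((1 : ℝ) / n)) ^ M ≤ (c ^ ((1 : ℝ) / n)) ^ n :=
        pow_le_pow_of_le_one (by positivity) (Real.rpow_le_one hc₀ hc₁ (by positivity)) hnM
    _ = c := by rw [one_div, Real.rpow_inv_natCast_pow hc₀ hn.ne']

theorem exists_mul_le_of_pow_mul_lt {s : ℕ → ℝ} {r : ℝ} (hr : 0 ≤ r) {M : ℕ}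
    (h : r ^ M * s 0 < s M) : ∃ j < M, r * s j ≤ s (j + 1) := by
  by_contra! hlt
  have : ∀ j ≤ M, s j ≤ r ^ j * s 0 := by
    intro j hj
    induction j with
    | zero => simp
    | succ j ih =>
      calc s (j + 1) ≤ r * s j := (hlt j (by omega)).le
        _ ≤ r * (r ^ j * s 0) := by gcongr; exact ih (by omega)
        _ = r ^ (j + 1) * s 0 := by ring
  exact (this M le_rfl).not_gt h

theorem flog_pos {x : ℝ} (hx : 0 < x) : 0 < flog x :=
  Real.logb_pos one_lt_two (by linarith)

theorem exists_growth_scale {E : Type*} [SeminormedAddCommGroup E] {e : ℕ → E} {c r : ℝ}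
    (hc₀ : 0 < c) (hc₁ : c ≤ 1) (hr : 0 ≤ r) {n Q M : ℕ} (hn : 0 < n) (hQ : 0 < Q) (hnM : n ≤ M)
    (hM : r ^ M * (M * Real.logb 2 Q + 1) < 1) (he₀ : ‖e 0‖ = 1)
    (hlower : ∀ k : ℕ, 1 ≤ k → c * k / flog k ≤ ‖∑ j ∈ range k, e j‖) :
    ∃ j < M, c ^ ((1 : ℝ) / n) * r * Q * ‖∑ t ∈ range (Q ^ j), e t‖ ≤
      ‖∑ t ∈ range (Q * Q ^ j), e t‖ := by
  simp only [← pow_succ']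
  refine exists_mul_le_of_pow_mul_lt (s := fun j => ‖∑ t ∈ range (Q ^ j), e t‖)
    (by positivity) ?_
  have hQM : (0 : ℝ) < (Q ^ M : ℕ) := by positivity
  have hlog : 0 < M * Real.logb 2 Q + 1 :=
    add_pos_of_nonneg_of_pos (mul_nonneg (Nat.cast_nonneg M)
      (Real.logb_nonneg one_lt_two (by exact_mod_cast hQ))) one_pos
  -- the lower estimate at `Q ^ M` beats `M` steps of growth at the rate `c ^ (1 / n) * r * Q`
  calc (c ^ ((1 : ℝ) / n) * r * Q) ^ M * ‖∑ t ∈ range (Q ^ 0), e t‖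
      = (c ^ ((1 : ℝ) / n)) ^ M * r ^ M * (Q ^ M : ℕ) := by simp [he₀, mul_pow]
    _ ≤ c * r ^ M * (Q ^ M : ℕ) := by gcongr; exact rpow_one_div_pow_le hc₀.le hc₁ hn hnM
    _ < c * (Q ^ M : ℕ) / (M * Real.logb 2 Q + 1) := by
        rw [lt_div_iff₀ hlog]
        nlinarith [mul_pos hc₀ hQM]
    _ ≤ c * (Q ^ M : ℕ) / flog (Q ^ M : ℕ) :=
        div_le_div_of_nonneg_left (by positivity) (flog_pos hQM) (flog_natCast_pow_le hQ M)
    _ ≤ _ := hlower _ (pow_pos hQ M)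

theorem james_blocking_uniform (n : ℕ) (hn : 1 ≤ n) (ε : ℝ) (hε : 0 < ε) :
    ∃ N : ℕ, ∀ (E : Type) (_ : NormedAddCommGroup E) (_ : NormedSpace ℝ E)
      (e : ℕ → E) (c : ℝ), 0 < c → c ≤ 1 →
      -- `(e_i)` is normalized and 1-subsymmetric
      (∀ i, ‖e i‖ = 1) →
      (∀ (l : ℕ) (a εs : Fin l → ℝ) (ns : Fin l → ℕ), StrictMono ns →
        (∀ i, εs i = 1 ∨ εs i = -1) →
        ‖∑ i, (a i * εs i) • e (ns i)‖ = ‖∑ i, a i • e (i : ℕ)‖) →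
      -- lower estimate `‖∑_{j<k} e_j‖ ≥ c·k/f(k)`
      (∀ k : ℕ, 1 ≤ k → c * k / flog k ≤ ‖∑ j ∈ Finset.range k, e j‖) →
      ∃ m : ℕ, n ≤ m ∧ m ≤ N ∧ n ∣ m ∧
        ∃ A : ℕ → Finset ℕ,
          (∀ i ∈ Finset.Icc 1 n, A i ⊆ Finset.Icc 1 m ∧ (A i).card = m / n) ∧
          (∀ i ∈ Finset.Icc 1 n, ∀ i' ∈ Finset.Icc 1 n, i < i' →
            ∀ s ∈ A i, ∀ t ∈ A i', s < t) ∧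
          -- the normalized vectors `x_i = (∑_{j ∈ A_i} e_j)/‖∑_{j ∈ A_i} e_j‖` are
          -- `c^{1/n}(1-ε)`-equivalent to the unit vector basis of `ℓ₁ⁿ`
          ∀ a : ℕ → ℝ,
            c ^ ((1 : ℝ) / n) * (1 - ε) * ∑ i ∈ Finset.Icc 1 n, |a i| ≤
              ‖∑ i ∈ Finset.Icc 1 n, (a i / ‖∑ j ∈ A i, e j‖) • (∑ j ∈ A i, e j)‖ ∧
            ‖∑ i ∈ Finset.Icc 1 n, (a i / ‖∑ j ∈ A i, e j‖) • (∑ j ∈ A i, e j)‖ ≤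
              ∑ i ∈ Finset.Icc 1 n, |a i| := by
  set δ := min ε (1 / 2)
  have hδ₀ : 0 < δ := lt_min hε one_half_pos
  have hδ₁ : δ ≤ 1 / 2 := min_le_right ε (1 / 2)
  obtain ⟨Q, hQ⟩ := exists_nat_ge (2 * n / δ)
  have hQ₀ : 0 < Q := by exact_mod_cast (by positivity : (0 : ℝ) < 2 * n / δ).trans_le hQ
  obtain ⟨M, hnM, hM⟩ := exists_le_pow_mul_lt_one n (r := 1 - δ / 2)
    (by linarith) (by linarith) (Real.logb 2 Q)
  refine ⟨n * Q ^ M, fun E _ _ e c hc₀ hc₁ he₀ he hlower => ?_⟩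
  obtain ⟨j, hjM, hj⟩ := exists_growth_scale hc₀ hc₁ (by linarith) hn hQ₀
    hnM hM (he₀ 0) hlower
  have hL : 0 < Q ^ j := pow_pos hQ₀ j
  obtain ⟨A, hA, hAlt, hAnorm⟩ := IsSubsymmetric.exists_blocks_of_growth he
    (mul_nonneg (by positivity) (by linarith)) hn hL hQ₀
    ((div_pos (by positivity) (flog_pos (by positivity))).trans_le (hlower _ hL)) hj
  refine ⟨n * Q ^ j, Nat.le_mul_of_pos_right n hL,
    Nat.mul_le_mul_left n (Nat.pow_le_pow_right hQ₀ hjM.le), dvd_mul_right n _, A, hA, hAlt,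
    fun a => ⟨le_trans ?_ (hAnorm a).1, (hAnorm a).2⟩⟩
  have hnQ : (n : ℝ) / Q ≤ δ / 2 := by
    rw [div_le_iff₀ (by exact_mod_cast hQ₀)]
    rw [div_le_iff₀ hδ₀] at hQ
    linarith
  -- `(1 - δ / 2) * (1 - n / Q) ≥ (1 - δ / 2) ^ 2 ≥ 1 - δ`
  have hconst : 1 - ε ≤ (1 - δ / 2) * (1 - n / Q) := by
    nlinarith [min_le_left ε (1 / 2), sq_nonneg δ]
  rw [mul_assoc _ (1 - δ / 2)]
  gcongr
end
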